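/- arXiv:1410.1333 — 4 statements merged into one kernel-verified Lean document; each statement's English description precedes it below -/
import Mathlib

section
/- Let q be a prime power, let k, m be positive integers, and let C be a non-zero F_q-linear subspace of Mat(k×m, F_q) with minimum rank d := minrk(C). Then dim_{F_q}(C) ≤ max{k,m}·(min{k,m} − d + 1). Moreover, for every integer 1 ≤ d ≤ min{k,m} there exists a non-zero F_q-linear subspace of Mat(k×m, F_q) with minimum rank d whose F_q-dimension equals max{k,m}·(min{k,m} − d + 1). -/
open Matrix BigOperators

/-- The Gaussian (q-)binomial coefficient, defined via the q-Pascal recursion. -/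
def qBinom (q : ℕ) : ℕ → ℕ → ℕ
  | _, 0 => 1
  | 0, _ + 1 => 0
  | s + 1, t + 1 => qBinom q s t + q ^ (t + 1) * qBinom q s (t + 1)

variable {F : Type} [Field F]

/-- The dual of a rank-metric code with respect to the trace product. -/
def dualCode {k m : ℕ} (C : Submodule F (Matrix (Fin k) (Fin m) F)) :
    Submodule F (Matrix (Fin k) (Fin m) F) where
  carrier := {N | ∀ M ∈ C, Matrix.trace (M * Nᵀ) = 0}
  add_mem' := by
    intro a b ha hb M hM
    rw [Set.mem_setOf_eq] at *
    rw [Matrix.transpose_add, Matrix.mul_add, Matrix.trace_add, ha M hM, hb M hM, add_zero]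
  zero_mem' := by
    intro M hM
    simp
  smul_mem' := by
    intro c N hN M hM
    rw [Set.mem_setOf_eq] at *
    rw [Matrix.transpose_smul, Matrix.mul_smul, Matrix.trace_smul, hN M hM, smul_zero]

/-- Minimum rank of a code. -/
noncomputable def minrk {k m : ℕ} (C : Submodule F (Matrix (Fin k) (Fin m) F)) : ℕ :=
  sInf {r | ∃ M ∈ C, M ≠ 0 ∧ M.rank = r}

/-- Maximum rank of a code. -/
noncomputable def maxrk {k m : ℕ} (C : Submodule F (Matrix (Fin k) (Fin m) F)) : ℕ :=
  sSup {r | ∃ M ∈ C, M.rank = r}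

/-- Rank distribution of a code. -/
noncomputable def rankDist {k m : ℕ} (C : Submodule F (Matrix (Fin k) (Fin m) F)) (i : ℕ) : ℕ :=
  Nat.card {M : Matrix (Fin k) (Fin m) F // M ∈ C ∧ M.rank = i}

/-- MRD codes. -/
def IsMRD {k m : ℕ} (C : Submodule F (Matrix (Fin k) (Fin m) F)) : Prop :=
  C = ⊥ ∨ Module.finrank F ↥C = max k m * (min k m - minrk C + 1)

/-- Optimal anticodes. -/
def IsOptimalAnticode {k m : ℕ} (C : Submodule F (Matrix (Fin k) (Fin m) F)) : Prop :=
  Module.finrank F ↥C = max k m * maxrk C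

/-- The subspace of matrices whose column space is contained in `U`. -/
def matIn {k : ℕ} (m : ℕ) (U : Submodule F (Fin k → F)) :
    Submodule F (Matrix (Fin k) (Fin m) F) where
  carrier := {M | ∀ j, Mᵀ j ∈ U}
  add_mem' := by
    intro a b ha hb j
    rw [Matrix.transpose_add]
    exact U.add_mem (ha j) (hb j)
  zero_mem' := by
    intro j
    rw [Matrix.transpose_zero]
    exact U.zero_mem
  smul_mem' := by
    intro c M hM j
    rw [Matrix.transpose_smul]
    exact U.smul_mem c (hM j)

/-- The dual of a subspace of `Fin k → K` with respect to the standard inner product. -/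
def dualPi {K : Type} [Field K] {k : ℕ} (C : Submodule K (Fin k → K)) :
    Submodule K (Fin k → K) where
  carrier := {β | ∀ α ∈ C, ∑ i, α i * β i = 0}
  add_mem' := by
    intro a b ha hb α hα
    rw [Set.mem_setOf_eq] at *
    have : ∑ i, α i * (a + b) i = (∑ i, α i * a i) + ∑ i, α i * b i := by
      rw [← Finset.sum_add_distrib]
      exact Finset.sum_congr rfl fun i _ => by simp [mul_add]
    rw [this, ha α hα, hb α hα, add_zero]
  zero_mem' := by
    intro α hα
    simp
  smul_mem' := by
    intro c β hβ α hα
    rw [Set.mem_setOf_eq] at *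
    have : ∑ i, α i * (c • β) i = c * ∑ i, α i * β i := by
      rw [Finset.mul_sum]
      exact Finset.sum_congr rfl fun i _ => by simp [smul_eq_mul]; ring
    rw [this, hβ α hα, mul_zero]

/-- The matrix associated to a vector `α ∈ K^k` with respect to a basis `G` of `K` over `F`. -/
noncomputable def matOfBasis (F K : Type) [Field F] [Field K] [Algebra F K]
    (k m : ℕ) (G : Module.Basis (Fin m) F K) :
    (Fin k → K) →ₗ[F] Matrix (Fin k) (Fin m) F where
  toFun α := Matrix.of fun i j => G.repr (α i) j
  map_add' α β := by
    ext i j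
    simp
  map_smul' c α := by
    ext i j
    simp

/-- The `h`-trace of a `k × m` matrix (`k ≤ m`). -/
def hTrace {k m : ℕ} (hkm : k ≤ m) (h : ℕ) (M : Matrix (Fin k) (Fin m) F) : F :=
  ∑ i : Fin k, if (i : ℕ) < h then M i (Fin.castLE hkm i) else 0

/-!
Singleton bound: a matrix has rank at most its number of non-zero rows, so a code of minimum
rank `d` is a code of minimum Hamming distance `d` over the alphabet `F^m` (the rows), and
deleting any `d - 1` rows is injective on it; hence `dim C ≤ m (k - d + 1)`. For `k > m`,
transpose.

Optimality (Gabidulin codes): let `K / F` have degree `m`, let `g₁, …, g_k ∈ K` be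
`F`-independent and `t = k - d + 1`. For `c ∈ K^t` the `q`-linearized polynomial
`L_c(x) = ∑ cⱼ x^(q^j)` is `F`-linear, and the matrix of `(L_c(gᵢ))ᵢ` in an `F`-basis of `K` has
rank `dim L_c(⟨g⟩) ≥ k - dim ker L_c`. The kernel consists of roots of a non-zero polynomial of
degree `≤ q^(t-1)`, so it has dimension `≤ t - 1` and the rank is `≥ d`. Thus `c ↦ matrix` is
injective with image of dimension `m t` and minimum rank `≥ d`, and `= d` by the Singleton bound.
-/

open Finset

theorem Submodule.finrank_le_of_le_hammingNorm {K V ι : Type*} [Field K] [AddCommGroup V]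
    [Module K V] [FiniteDimensional K V] [DecidableEq V] [Fintype ι]
    (C : Submodule K (ι → V)) {d : ℕ} (hd : ∀ x ∈ C, x ≠ 0 → d ≤ hammingNorm x) :
    Module.finrank K C ≤ (Fintype.card ι + 1 - d) * Module.finrank K V := by
  classical
  obtain ⟨S, -, hS⟩ :=
    exists_subset_card_eq (s := (univ : Finset ι)) (n := Fintype.card ι - (d - 1)) (by simp)
  let restrict : (ι → V) →ₗ[K] (S → V) := LinearMap.funLeft K V Subtype.val
  have hinj : Function.Injective (restrict ∘ₗ C.subtype) := by
    refine (injective_iff_map_eq_zero _).2 fun ⟨x, hx⟩ hx0 => ?_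
    by_contra hne
    have hxne : x ≠ 0 := fun h => hne (Subtype.ext h)
    have hsupp : hammingNorm x ≤ #Sᶜ := card_le_card fun i hi => by
      simp only [mem_compl]
      intro hiS
      exact (mem_filter.1 hi).2 (congrFun hx0 ⟨i, hiS⟩)
    have hdx := hd x hx hxne
    have hpos := hammingNorm_pos_iff.2 hxne
    rw [card_compl, hS] at hsupp
    omega
  calc Module.finrank K C ≤ Module.finrank K (S → V) :=
        LinearMap.finrank_le_finrank_of_injective hinj
    _ = #S * Module.finrank K V := by simp [Module.finrank_pi_fintype]
    _ ≤ _ := Nat.mul_le_mul_right _ (by omega)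

theorem Matrix.rank_le_hammingNorm {m n : Type*} [Fintype m] [Fintype n] [DecidableEq F]
    (M : Matrix m n F) : M.rank ≤ hammingNorm M := by
  classical
  rw [rank_eq_finrank_span_row]
  refine (Submodule.finrank_mono (Submodule.span_le.2 ?_)).trans
    ((finrank_span_finset_le_card (({i | M i ≠ 0} : Finset m).image M)).trans
      (card_image_le.trans_eq (by unfold hammingNorm; congr!)))
  rintro _ ⟨i, rfl⟩
  by_cases hi : M i = 0
  · simp [row, hi]
  · exact Submodule.subset_span (mem_image.2 ⟨i, by simpa using hi, rfl⟩)

theorem Submodule.finrank_le_finrank_map_add_finrank_ker {K V V₂ : Type*} [Field K]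
    [AddCommGroup V] [Module K V] [FiniteDimensional K V] [AddCommGroup V₂] [Module K V₂]
    (W : Submodule K V) (f : V →ₗ[K] V₂) :
    Module.finrank K W ≤ Module.finrank K (W.map f) + Module.finrank K (LinearMap.ker f) := by
  have h := (f.domRestrict W).finrank_range_add_finrank_ker
  rw [LinearMap.range_domRestrict, LinearMap.ker_domRestrict] at h
  have hker : Module.finrank K ((LinearMap.ker f).comap W.subtype) ≤
      Module.finrank K (LinearMap.ker f) := by
    rw [← Submodule.finrank_map_subtype_eq, Submodule.map_comap_subtype]
    exact Submodule.finrank_mono inf_le_right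
  omega

section minrk

variable {k m : ℕ} {C : Submodule F (Matrix (Fin k) (Fin m) F)}

theorem minrk_le_rank {M : Matrix (Fin k) (Fin m) F} (hM : M ∈ C) (hM0 : M ≠ 0) :
    minrk C ≤ M.rank :=
  Nat.sInf_le ⟨M, hM, hM0, rfl⟩

theorem exists_rank_eq_minrk (hC : C ≠ ⊥) : ∃ M ∈ C, M ≠ 0 ∧ M.rank = minrk C := by
  obtain ⟨M, hM, hM0⟩ := Submodule.exists_mem_ne_zero_of_ne_bot hC
  exact Nat.sInf_mem (s := {r | ∃ M ∈ C, M ≠ 0 ∧ M.rank = r}) ⟨M.rank, M, hM, hM0, rfl⟩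

theorem minrk_le_height : minrk C ≤ k := by
  rcases eq_or_ne C ⊥ with rfl | hC
  · simp [minrk]
  obtain ⟨M, -, -, hM⟩ := exists_rank_eq_minrk hC
  exact hM ▸ M.rank_le_height

theorem finrank_le_mul_sub_minrk (C : Submodule F (Matrix (Fin k) (Fin m) F)) :
    Module.finrank F C ≤ m * (k - minrk C + 1) := by
  classical
  have h := C.finrank_le_of_le_hammingNorm fun M hM hM0 =>
    (minrk_le_rank hM hM0).trans (rank_le_hammingNorm M)
  rw [Fintype.card_fin, Module.finrank_fin_fun] at h
  exact h.trans (by rw [mul_comm]; gcongr; omega)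

theorem minrk_map_of_rank_eq {k' m' : ℕ}
    (e : Matrix (Fin k) (Fin m) F ≃ₗ[F] Matrix (Fin k') (Fin m') F) (he : ∀ M, (e M).rank = M.rank)
    (C : Submodule F (Matrix (Fin k) (Fin m) F)) : minrk (C.map e.toLinearMap) = minrk C := by
  unfold minrk
  congr 1
  ext r
  constructor
  · rintro ⟨_, ⟨M, hM, rfl⟩, hM0, rfl⟩
    exact ⟨M, hM, by simpa using hM0, (he M).symm⟩
  · rintro ⟨M, hM, hM0, rfl⟩
    exact ⟨e M, Submodule.mem_map_of_mem hM, by simpa using hM0, he M⟩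

theorem minrk_map_transpose (C : Submodule F (Matrix (Fin k) (Fin m) F)) :
    minrk (C.map (transposeLinearEquiv (Fin k) (Fin m) F F).toLinearMap) = minrk C :=
  minrk_map_of_rank_eq (transposeLinearEquiv (Fin k) (Fin m) F F) (fun M => rank_transpose M) C

end minrk

section Linearized

open Polynomial

variable {K : Type*} [Field K]

noncomputable def linearizedPoly (q : ℕ) {t : ℕ} (c : Fin t → K) : K[X] :=
  ∑ j : Fin t, C (c j) * X ^ q ^ (j : ℕ)

theorem natDegree_linearizedPoly_le {q t : ℕ} (hq : 0 < q) (c : Fin t → K) :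
    (linearizedPoly q c).natDegree ≤ q ^ (t - 1) :=
  natDegree_sum_le_of_forall_le _ _ fun j _ =>
    (natDegree_C_mul_X_pow_le _ _).trans (Nat.pow_le_pow_right hq (by omega))

theorem coeff_linearizedPoly {q t : ℕ} (hq : 1 < q) (c : Fin t → K) (j : Fin t) :
    (linearizedPoly q c).coeff (q ^ (j : ℕ)) = c j := by
  rw [linearizedPoly, finsetSum_coeff, Finset.sum_eq_single j]
  · simp
  · intro i _ hij
    rw [coeff_C_mul_X_pow, if_neg]
    exact fun h => hij (Fin.ext (Nat.pow_right_injective hq h).symm)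
  · simp

theorem linearizedPoly_ne_zero {q t : ℕ} (hq : 1 < q) {c : Fin t → K} (hc : c ≠ 0) :
    linearizedPoly q c ≠ 0 := by
  obtain ⟨j, hj⟩ := Function.ne_iff.1 hc
  exact fun h => hj (by rw [← coeff_linearizedPoly hq c j, h, coeff_zero]; rfl)

variable [Fintype F] [Algebra F K]

variable (F) in
noncomputable def linearizedMap (t : ℕ) : (Fin t → K) →ₗ[K] Module.End F K :=
  ∑ j : Fin t,
    (LinearMap.proj j).smulRight ((FiniteField.frobeniusAlgHom F K).toLinearMap ^ (j : ℕ))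

theorem linearizedMap_apply {t : ℕ} (c : Fin t → K) (x : K) :
    linearizedMap F t c x = (linearizedPoly (Fintype.card F) c).eval x := by
  simp [linearizedMap, linearizedPoly, eval_finsetSum, Module.End.pow_apply,
    FiniteField.coe_frobeniusAlgHom, pow_iterate]

theorem finrank_ker_linearizedMap_le [Finite K] {t : ℕ} {c : Fin t → K} (hc : c ≠ 0) :
    Module.finrank F (LinearMap.ker (linearizedMap F t c)) ≤ t - 1 := by
  set P := linearizedPoly (Fintype.card F) c
  have hq : 1 < Fintype.card F := Fintype.one_lt_card
  have hP : P ≠ 0 := linearizedPoly_ne_zero hq hc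
  have hroots : (LinearMap.ker (linearizedMap F t c) : Set K) ⊆ P.rootSet K := fun x hx => by
    rw [mem_rootSet, aeval_def, Algebra.algebraMap_self, eval₂_id, ← linearizedMap_apply]
    exact ⟨hP, hx⟩
  have hcard : Fintype.card F ^ Module.finrank F (LinearMap.ker (linearizedMap F t c)) ≤
      Fintype.card F ^ (t - 1) :=
    calc _ = Nat.card (LinearMap.ker (linearizedMap F t c)) := by
          rw [Module.natCard_eq_pow_finrank (K := F), Nat.card_eq_fintype_card]
      _ ≤ (P.rootSet K).ncard := by
          rw [← Nat.card_coe_set_eq]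
          exact Set.ncard_le_ncard hroots (P.rootSet_finite K)
      _ ≤ P.natDegree := ncard_rootSet_le P K
      _ ≤ _ := natDegree_linearizedPoly_le (by omega) c
  exact (Nat.pow_le_pow_iff_right hq).1 hcard

end Linearized

section Gabidulin

variable {K : Type} [Field K] [Algebra F K] {k m : ℕ}

theorem rank_matOfBasis (G : Module.Basis (Fin m) F K) (α : Fin k → K) :
    (matOfBasis F K k m G α).rank = Module.finrank F (Submodule.span F (Set.range α)) := by
  have hrows : Set.range (matOfBasis F K k m G α).row = G.equivFun '' Set.range α := by
    rw [← Set.range_comp]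
    rfl
  rw [rank_eq_finrank_span_row, hrows, ← LinearEquiv.coe_toLinearMap, ← Submodule.map_span,
    LinearEquiv.finrank_map_eq]

variable [Fintype F]

noncomputable def gabidulinMap (G : Module.Basis (Fin m) F K) (g : Fin k → K) (t : ℕ) :
    (Fin t → K) →ₗ[F] Matrix (Fin k) (Fin m) F where
  toFun c := matOfBasis F K k m G fun i => linearizedMap F t c (g i)
  map_add' a b := by
    rw [← map_add]
    congr
    ext
    simp
  map_smul' r c := by
    rw [RingHom.id_apply, ← map_smul]
    congr
    ext
    simp [LinearMap.map_smul_of_tower]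

theorem le_rank_gabidulinMap [Finite K] (G : Module.Basis (Fin m) F K) {g : Fin k → K}
    (hg : LinearIndependent F g) {t : ℕ} {c : Fin t → K} (hc : c ≠ 0) :
    k - (t - 1) ≤ (gabidulinMap G g t c).rank := by
  have hspan : Submodule.span F (Set.range fun i => linearizedMap F t c (g i)) =
      (Submodule.span F (Set.range g)).map (linearizedMap F t c) := by
    rw [Submodule.map_span, ← Set.range_comp]
    rfl
  have hdim := (Submodule.span F (Set.range g)).finrank_le_finrank_map_add_finrank_ker
    (linearizedMap F t c)
  have hker := finrank_ker_linearizedMap_le (F := F) hc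
  rw [finrank_span_eq_card hg, Fintype.card_fin] at *
  rw [gabidulinMap, LinearMap.coe_mk, AddHom.coe_mk, rank_matOfBasis, hspan]
  omega

end Gabidulin

theorem exists_minrk_eq_of_le [Fintype F] {k m d : ℕ} (hkm : k ≤ m) (hd : 1 ≤ d) (hdk : d ≤ k) :
    ∃ C : Submodule F (Matrix (Fin k) (Fin m) F), C ≠ ⊥ ∧ minrk C = d ∧
      Module.finrank F C = m * (k - d + 1) := by
  have : NeZero m := ⟨by omega⟩
  have : Fact (ringChar F).Prime := ⟨CharP.char_is_prime F _⟩
  let K := FiniteField.Extension F (ringChar F) m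
  let G : Module.Basis (Fin m) F K :=
    Module.finBasisOfFinrankEq F K (FiniteField.finrank_extension F _ m)
  have hg : LinearIndependent F (G ∘ Fin.castLE hkm) :=
    G.linearIndependent.comp _ (Fin.castLE_injective hkm)
  set t := k - d + 1
  have hrank : ∀ c ≠ 0, d ≤ (gabidulinMap G (G ∘ Fin.castLE hkm) t c).rank := fun c hc => by
    have hle := le_rank_gabidulinMap G hg hc
    omega
  have hinj : Function.Injective (gabidulinMap G (G ∘ Fin.castLE hkm) t) := by
    refine (injective_iff_map_eq_zero _).2 fun c hc => by_contra fun hc0 => ?_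
    have hle := hrank c hc0
    rw [hc, rank_zero] at hle
    omega
  set C := LinearMap.range (gabidulinMap G (G ∘ Fin.castLE hkm) t)
  have hdim : Module.finrank F C = m * t := by
    rw [LinearMap.finrank_range_of_inj hinj, Module.finrank_pi_fintype,
      FiniteField.finrank_extension]
    simp [mul_comm]
  have hC : C ≠ ⊥ := by
    intro h
    rw [h, finrank_bot] at hdim
    have : 0 < m * t := Nat.mul_pos (by omega) (by omega)
    omega
  have hmin_ge : d ≤ minrk C := by
    obtain ⟨_, ⟨c, rfl⟩, hM0, hM⟩ := exists_rank_eq_minrk hC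
    exact hM ▸ hrank c (by rintro rfl; simp at hM0)
  have hmin_le : minrk C ≤ d := by
    have hsingleton := Nat.le_of_mul_le_mul_left (hdim ▸ finrank_le_mul_sub_minrk C) (by omega)
    have hk := minrk_le_height (C := C)
    omega
  exact ⟨C, hC, le_antisymm hmin_le hmin_ge, hdim⟩

theorem stmt_0_general (F : Type) [Field F] [Fintype F] (k m : ℕ) :
    (∀ C : Submodule F (Matrix (Fin k) (Fin m) F), C ≠ ⊥ →
      Module.finrank F ↥C ≤ max k m * (min k m - minrk C + 1)) ∧
    (∀ d : ℕ, 1 ≤ d → d ≤ min k m →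
      ∃ C : Submodule F (Matrix (Fin k) (Fin m) F), C ≠ ⊥ ∧ minrk C = d ∧
        Module.finrank F ↥C = max k m * (min k m - d + 1)) := by
  refine ⟨fun C _ => ?_, fun d hd hdk => ?_⟩
  · rcases le_total k m with hkm | hmk
    · rw [max_eq_right hkm, min_eq_left hkm]
      exact finrank_le_mul_sub_minrk C
    · rw [max_eq_left hmk, min_eq_right hmk, ← minrk_map_transpose C,
        ← LinearEquiv.finrank_map_eq (transposeLinearEquiv (Fin k) (Fin m) F F) C]
      exact finrank_le_mul_sub_minrk _
  · rcases le_total k m with hkm | hmk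
    · rw [max_eq_right hkm, min_eq_left hkm] at *
      exact exists_minrk_eq_of_le hkm hd hdk
    · rw [max_eq_left hmk, min_eq_right hmk] at *
      obtain ⟨C, hC, hCd, hCdim⟩ := exists_minrk_eq_of_le (F := F) hmk hd hdk
      refine ⟨C.map (transposeLinearEquiv (Fin m) (Fin k) F F).toLinearMap, ?_, ?_, ?_⟩
      · rwa [Ne, Submodule.map_eq_bot_iff]
      · rw [minrk_map_transpose, hCd]
      · rw [LinearEquiv.finrank_map_eq, hCdim]

/-- Singleton-type bound for Delsarte rank-metric codes, and existence of codes
attaining it (Theorem 5.4 of Delsarte). -/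
theorem stmt_0 (F : Type) [Field F] [Fintype F] (k m : ℕ) (hk : 0 < k) (hm : 0 < m) :
    (∀ C : Submodule F (Matrix (Fin k) (Fin m) F), C ≠ ⊥ →
      Module.finrank F ↥C ≤ max k m * (min k m - minrk C + 1)) ∧
    (∀ d : ℕ, 1 ≤ d → d ≤ min k m →
      ∃ C : Submodule F (Matrix (Fin k) (Fin m) F), C ≠ ⊥ ∧ minrk C = d ∧
        Module.finrank F ↥C = max k m * (min k m - d + 1)) :=
  stmt_0_general F k m
end

section
/- Let q be a prime power, let k, m be positive integers, let C ⊆ F_{q^m}^k be an F_{q^m}-linear subspace, and let G = {γ_1, …, γ_m} and G' = {γ'_1, …, γ'_m} be bases of F_{q^m} over F_q that are orthogonal, i.e., Trace(γ'_i γ_j) = δ_{ij} for all i, j, where Trace : F_{q^m} → F_q is the field trace α ↦ α + α^q + ⋯ + α^{q^{m−1}}. Then C_{G'}(C^⊥) = C_G(C)^⊥, where C^⊥ is the dual of C with respect to the standard inner product on F_{q^m}^k and C_G(C)^⊥ is the dual with respect to the trace product on Mat(k×m, F_q). -/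
open Matrix BigOperators

variable {F : Type} [Field F]

/-!
Expanding in the dual bases `G` and `G'` gives `Tr(x y) = ∑ⱼ G.repr x j * G'.repr y j`, so the
trace product of `M_G(α)` and `M_{G'}(β)` is `Tr(∑ᵢ αᵢ βᵢ)`. This gives `⊆`. For `⊇`, every
matrix is some `M_{G'}(β)`; if it is trace-orthogonal to `C_G(C)`, then testing against
`M_G(c α)` for all `c : K` gives `Tr(c ∑ᵢ αᵢ βᵢ) = 0`, and the trace form is nondegenerate
(again by the dual bases), so `∑ᵢ αᵢ βᵢ = 0`.
-/

section OrthogonalBases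

variable {F K : Type} [Field F] [Field K] [Algebra F K] {m : ℕ}
  {G G' : Module.Basis (Fin m) F K}

theorem Module.Basis.trace_mul_eq_sum_repr_mul_repr
    (horth : ∀ i j : Fin m, Algebra.trace F K (G' i * G j) = if i = j then 1 else 0) (x y : K) :
    Algebra.trace F K (x * y) = ∑ j, G.repr x j * G'.repr y j := by
  conv_lhs => rw [← G.sum_repr x, ← G'.sum_repr y]
  simp_rw [Finset.sum_mul_sum, map_sum, smul_mul_smul_comm, map_smul, mul_comm (G _), horth,
    smul_eq_mul, mul_ite, mul_one, mul_zero, Finset.sum_ite_eq', Finset.mem_univ, if_true]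

theorem Module.Basis.eq_zero_of_forall_trace_mul_eq_zero
    (horth : ∀ i j : Fin m, Algebra.trace F K (G' i * G j) = if i = j then 1 else 0) {x : K}
    (hx : ∀ c : K, Algebra.trace F K (c * x) = 0) : x = 0 := by
  refine G.forall_coord_eq_zero_iff.mp fun j => ?_
  rw [← hx (G' j), mul_comm, G.trace_mul_eq_sum_repr_mul_repr horth, Module.Basis.coord_apply]
  simp [Finsupp.single_apply]

theorem trace_matOfBasis_mul_transpose
    (horth : ∀ i j : Fin m, Algebra.trace F K (G' i * G j) = if i = j then 1 else 0) {k : ℕ}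
    (α β : Fin k → K) :
    Matrix.trace (matOfBasis F K k m G α * (matOfBasis F K k m G' β)ᵀ) =
      Algebra.trace F K (∑ i, α i * β i) := by
  simp only [map_sum, Matrix.trace, Matrix.diag_apply, Matrix.mul_apply,
    G.trace_mul_eq_sum_repr_mul_repr horth]
  rfl

end OrthogonalBases

theorem matOfBasis_surjective {F K : Type} [Field F] [Field K] [Algebra F K] {k m : ℕ}
    (G : Module.Basis (Fin m) F K) : Function.Surjective (matOfBasis F K k m G) := fun N =>
  ⟨fun i => G.equivFun.symm (N i), by
    ext i j
    exact congrFun (G.equivFun.apply_symm_apply (N i)) j⟩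

theorem stmt_2_general (F K : Type) [Field F] [Field K] [Algebra F K]
    (k m : ℕ) (G G' : Module.Basis (Fin m) F K)
    (horth : ∀ i j : Fin m, Algebra.trace F K (G' i * G j) = if i = j then 1 else 0)
    (C : Submodule K (Fin k → K)) :
    Submodule.map (matOfBasis F K k m G') ((dualPi C).restrictScalars F) =
      dualCode (Submodule.map (matOfBasis F K k m G) (C.restrictScalars F)) := by
  ext N
  constructor
  · rintro ⟨β, hβ, rfl⟩ _ ⟨α, hα, rfl⟩
    rw [trace_matOfBasis_mul_transpose horth, hβ α hα, map_zero]
  · intro hN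
    obtain ⟨β, rfl⟩ := matOfBasis_surjective G' N
    refine ⟨β, fun α hα => G.eq_zero_of_forall_trace_mul_eq_zero horth fun c => ?_, rfl⟩
    have hcα := hN _ ⟨c • α, C.smul_mem c hα, rfl⟩
    rw [trace_matOfBasis_mul_transpose horth] at hcα
    simpa [Finset.mul_sum, mul_assoc] using hcα

/-- For orthogonal bases `G`, `G'` of `K/F`, the Delsarte code associated (via `G'`) to the
dual of a Gabidulin code `C` equals the trace-product dual of the Delsarte code associated
to `C` via `G`. -/
theorem stmt_2 (F K : Type) [Field F] [Fintype F] [Field K] [Fintype K] [Algebra F K]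
    (k m : ℕ) (hk : 0 < k) (hm : 0 < m) (G G' : Module.Basis (Fin m) F K)
    (horth : ∀ i j : Fin m, Algebra.trace F K (G' i * G j) = if i = j then 1 else 0)
    (C : Submodule K (Fin k → K)) :
    Submodule.map (matOfBasis F K k m G') ((dualPi C).restrictScalars F) =
      dualCode (Submodule.map (matOfBasis F K k m G) (C.restrictScalars F)) :=
  stmt_2_general F K k m G G' horth C
end

section
/- Let q be a prime power, let k, m be positive integers, let C ⊆ Mat(k×m, F_q) be an F_q-linear subspace, and let U ⊆ F_q^k be a subspace of dimension s over F_q. Then q^{m(k−s)} · |C ∩ Mat_U(k×m, F_q)| = |C| · |C^⊥ ∩ Mat_{U^⊥}(k×m, F_q)|. -/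
open Matrix BigOperators

variable {F : Type} [Field F]

/-! The trace product is a nondegenerate bilinear form on `Mat(k×m, F)`, so
`dim C^⊥ = km - dim C`, and `Mat_U^⊥ = Mat_{U^⊥}` column by column. Hence
`C^⊥ ∩ Mat_{U^⊥} = (C + Mat_U)^⊥`, whose dimension `km - dim C - ms + dim (C ∩ Mat_U)` comes
from Grassmann's formula; exponentiating gives the count. -/

open Module

namespace LinearMap.BilinForm

variable {R M : Type*} [CommSemiring R] [AddCommMonoid M] [Module R M]

lemma orthogonal_sup (B : LinearMap.BilinForm R M) (N L : Submodule R M) :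
    B.orthogonal (N ⊔ L) = B.orthogonal N ⊓ B.orthogonal L := by
  refine le_antisymm (le_inf (orthogonal_le le_sup_left) (orthogonal_le le_sup_right)) ?_
  rintro y ⟨hN, hL⟩ x hx
  obtain ⟨n, hn, l, hl, rfl⟩ := Submodule.mem_sup.mp hx
  rw [map_add, LinearMap.add_apply, show B n y = 0 from hN n hn, show B l y = 0 from hL l hl,
    add_zero]

variable {K V : Type*} [Field K] [AddCommGroup V] [Module K V] [FiniteDimensional K V]

lemma finrank_orthogonal_inf_orthogonal_add {B : LinearMap.BilinForm K V} (hB : B.Nondegenerate)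
    (N L : Submodule K V) :
    finrank K ↥(B.orthogonal N ⊓ B.orthogonal L) + finrank K N + finrank K L =
      finrank K V + finrank K ↥(N ⊓ L) := by
  have hsup := Submodule.finrank_sup_add_finrank_inf_eq N L
  have hle := Submodule.finrank_le (N ⊔ L)
  rw [← orthogonal_sup, finrank_orthogonal hB]
  omega

end LinearMap.BilinForm

namespace Matrix

variable {ι κ R : Type*} [Fintype ι] [Fintype κ]

section CommSemiring

variable [CommSemiring R]

def traceProduct : LinearMap.BilinForm R (Matrix ι κ R) :=
  LinearMap.mk₂ R (fun M N => trace (M * Nᵀ))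
    (fun _ _ _ => by rw [Matrix.add_mul, trace_add])
    (fun _ _ _ => by rw [Matrix.smul_mul, trace_smul])
    (fun _ _ _ => by rw [transpose_add, Matrix.mul_add, trace_add])
    (fun _ _ _ => by rw [transpose_smul, Matrix.mul_smul, trace_smul])

lemma traceProduct_apply (M N : Matrix ι κ R) : traceProduct M N = trace (M * Nᵀ) := rfl

lemma trace_mul_transpose_eq_sum_dotProduct (M N : Matrix ι κ R) :
    trace (M * Nᵀ) = ∑ j, Mᵀ j ⬝ᵥ Nᵀ j := by
  simp only [trace, diag, mul_apply, dotProduct, transpose_apply]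
  exact Finset.sum_comm

lemma traceProduct_single [DecidableEq ι] [DecidableEq κ] (M : Matrix ι κ R) (i : ι) (j : κ) :
    traceProduct M (single i j 1) = M i j := by
  simp [traceProduct_apply, trace_mul_transpose_eq_sum_dotProduct, dotProduct, single, ite_and]

end CommSemiring

lemma traceProduct_nondegenerate [Field R] :
    (traceProduct : LinearMap.BilinForm R (Matrix ι κ R)).Nondegenerate := by
  classical
  refine .ofSeparatingLeft fun M hM => ?_
  ext i j
  rw [← traceProduct_single M i j, hM, zero_apply]

end Matrix

variable {k m : ℕ}

lemma dualCode_eq_orthogonal (C : Submodule F (Matrix (Fin k) (Fin m) F)) :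
    dualCode C = traceProduct.orthogonal C := rfl

lemma mem_matIn_iff (U : Submodule F (Fin k → F)) (M : Matrix (Fin k) (Fin m) F) :
    M ∈ matIn m U ↔ ∀ j, Mᵀ j ∈ U := Iff.rfl

def matInEquivPi (U : Submodule F (Fin k → F)) : matIn m U ≃ₗ[F] (Fin m → U) where
  toFun M j := ⟨(M : Matrix (Fin k) (Fin m) F)ᵀ j, M.2 j⟩
  map_add' _ _ := rfl
  map_smul' _ _ := rfl
  invFun f := ⟨(of fun j => (f j : Fin k → F))ᵀ, fun j => (f j).2⟩
  left_inv _ := rfl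
  right_inv _ := rfl

lemma finrank_matIn (U : Submodule F (Fin k → F)) :
    finrank F (matIn m U) = m * finrank F U := by
  rw [(matInEquivPi U).finrank_eq, finrank_pi_fintype, Finset.sum_const, Finset.card_univ,
    Fintype.card_fin, smul_eq_mul]

lemma dualCode_matIn (U : Submodule F (Fin k → F)) :
    dualCode (matIn m U) = matIn m (dualPi U) := by
  ext N
  simp only [dualCode_eq_orthogonal, LinearMap.BilinForm.mem_orthogonal_iff, mem_matIn_iff,
    traceProduct_apply, trace_mul_transpose_eq_sum_dotProduct]
  constructor
  · intro hN j α hα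
    have hcol : ∀ j', updateRow 0 j α j' ∈ U := fun j' => by
      by_cases h : j' = j
      · rwa [h, updateRow_self]
      · rw [updateRow_ne h]
        exact U.zero_mem
    have := hN (updateRow 0 j α)ᵀ hcol
    rwa [transpose_transpose, Fintype.sum_eq_single j fun j' h => by
      rw [updateRow_ne h]; exact zero_dotProduct _, updateRow_self] at this
  · intro hN M hM
    exact Finset.sum_eq_zero fun j _ => hN j _ (hM j)

theorem stmt_4_general (F : Type) [Field F] [Fintype F] (q k m : ℕ) (hq : Fintype.card F = q)
    (C : Submodule F (Matrix (Fin k) (Fin m) F))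
    (U : Submodule F (Fin k → F)) (s : ℕ) (hs : Module.finrank F ↥U = s) :
    q ^ (m * (k - s)) * Nat.card ↥(C ⊓ matIn m U) =
      Nat.card ↥C * Nat.card ↥(dualCode C ⊓ matIn m (dualPi U)) := by
  have hsk : s ≤ k := by simpa [hs] using U.finrank_le
  have key := LinearMap.BilinForm.finrank_orthogonal_inf_orthogonal_add
    traceProduct_nondegenerate C (matIn m U)
  rw [← dualCode_eq_orthogonal, ← dualCode_eq_orthogonal, dualCode_matIn, finrank_matIn, hs,
    finrank_matrix, Fintype.card_fin, Fintype.card_fin, finrank_self, mul_one] at key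
  have hcard (W : Submodule F (Matrix (Fin k) (Fin m) F)) : Nat.card W = q ^ finrank F W := by
    rw [natCard_eq_pow_finrank (K := F), Nat.card_eq_fintype_card, hq]
  rw [hcard, hcard, hcard, ← pow_add, ← pow_add]
  have hdim : m * (k - s) + m * s = k * m := by
    rw [← Nat.mul_add, Nat.sub_add_cancel hsk, Nat.mul_comm]
  congr 1
  omega

/-- Counting lemma relating `C ∩ Mat_U` and `C^perp ∩ Mat_{U^perp}`. -/
theorem stmt_4 (F : Type) [Field F] [Fintype F] (q k m : ℕ) (hq : Fintype.card F = q)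
    (hk : 0 < k) (hm : 0 < m) (C : Submodule F (Matrix (Fin k) (Fin m) F))
    (U : Submodule F (Fin k → F)) (s : ℕ) (hs : Module.finrank F ↥U = s) :
    q ^ (m * (k - s)) * Nat.card ↥(C ⊓ matIn m U) =
      Nat.card ↥C * Nat.card ↥(dualCode C ⊓ matIn m (dualPi U)) :=
  stmt_4_general F q k m hq C U s hs
end

section
/- Let q be a prime power, let k, m be positive integers, let C ⊆ Mat(k×m, F_q) be an F_q-linear subspace with rank distribution (A_i)_{i≥0}, and let 0 ≤ s ≤ k be an integer. Then Σ_{U ⊆ F_q^k, dim U = s} |C ∩ Mat_U(k×m, F_q)| = Σ_{i=0}^k A_i · [k−i choose k−s]_q, where the first sum ranges over all s-dimensional subspaces U of F_q^k. -/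
open Matrix BigOperators

variable {F : Type} [Field F]

/-!
Count the pairs `(U, M)` with `M ∈ C`, `dim U = s` and `colsp M ⊆ U` in two ways. For a fixed `M`
of rank `i`, taking dual annihilators identifies the `s`-dimensional `U ⊇ colsp M` with the
`(k - s)`-dimensional subspaces of the `(k - i)`-dimensional space `(colsp M)⁰`, of which there
are `[k-i choose k-s]_q`. That `[n choose t]_q` counts the `t`-dimensional subspaces of `𝔽_q^n`
follows by counting the linearly independent `t`-tuples of `𝔽_q^n` once directly and once
grouped by their span.
-/

open Finset Module

section QBinom

theorem qBinom_zero_right (q n : ℕ) : qBinom q n 0 = 1 := by cases n <;> rfl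

theorem qBinom_succ_succ (q n t : ℕ) :
    qBinom q (n + 1) (t + 1) = qBinom q n t + q ^ (t + 1) * qBinom q n (t + 1) := rfl

theorem qBinom_eq_zero_of_lt {q n t : ℕ} (h : n < t) : qBinom q n t = 0 := by
  induction n generalizing t with
  | zero => obtain ⟨t, rfl⟩ := Nat.exists_eq_succ_of_ne_zero (by omega : t ≠ 0); rfl
  | succ n ih =>
    obtain ⟨t, rfl⟩ := Nat.exists_eq_succ_of_ne_zero (by omega : t ≠ 0)
    rw [qBinom_succ_succ, ih (by omega), ih (by omega), mul_zero, add_zero]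

theorem prod_range_succ_pow_sub_pow {R : Type*} [CommRing R] (x : R) (n t : ℕ) :
    ∏ i ∈ range (t + 1), (x ^ (n + 1) - x ^ i) =
      (x ^ (n + 1) - 1) * x ^ t * ∏ i ∈ range t, (x ^ n - x ^ i) := by
  have h : ∀ i ∈ range t, x ^ (n + 1) - x ^ (i + 1) = x * (x ^ n - x ^ i) := fun i _ => by ring
  rw [prod_range_succ', prod_congr rfl h, prod_mul_distrib, prod_const, card_range]
  ring

/-- `∏ (q^n - q^i)` counts the independent `t`-tuples in `𝔽_q^n` and `∏ (q^t - q^i)` the bases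
of a `t`-dimensional subspace. -/
theorem qBinom_mul_prod_pow_sub_pow (q n t : ℕ) :
    (qBinom q n t : ℤ) * ∏ i ∈ range t, ((q : ℤ) ^ t - q ^ i) =
      ∏ i ∈ range t, ((q : ℤ) ^ n - q ^ i) := by
  induction n generalizing t with
  | zero =>
    cases t with
    | zero => simp [qBinom_zero_right]
    | succ t => simp [qBinom_eq_zero_of_lt, prod_range_succ']
  | succ n ih =>
    cases t with
    | zero => simp [qBinom_zero_right]
    | succ t =>
      have h₁ := ih t
      have h₂ := ih (t + 1)
      rw [prod_range_succ_pow_sub_pow, prod_range_succ] at h₂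
      rw [qBinom_succ_succ, prod_range_succ_pow_sub_pow, prod_range_succ_pow_sub_pow]
      push_cast
      linear_combination ((q : ℤ) ^ (t + 1) - 1) * (q : ℤ) ^ t * h₁ + (q : ℤ) ^ (t + 1) * h₂

theorem cast_prod_pow_sub_pow {q : ℕ} (hq : 1 ≤ q) {n t : ℕ} (ht : t ≤ n) :
    ((∏ i : Fin t, (q ^ n - q ^ (i : ℕ)) : ℕ) : ℤ) = ∏ i ∈ range t, ((q : ℤ) ^ n - q ^ i) := by
  rw [Fin.prod_univ_eq_prod_range (fun i => q ^ n - q ^ i), Nat.cast_prod]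
  refine prod_congr rfl fun i hi => ?_
  rw [Nat.cast_sub (Nat.pow_le_pow_right hq (by grind)), Nat.cast_pow, Nat.cast_pow]

theorem prod_pow_sub_pow_ne_zero {q : ℕ} (hq : 2 ≤ q) (t : ℕ) :
    ∏ i ∈ range t, ((q : ℤ) ^ t - q ^ i) ≠ 0 :=
  prod_ne_zero_iff.mpr fun i hi => sub_ne_zero.mpr fun h =>
    (mem_range.mp hi).ne' (Nat.pow_right_injective hq (by exact_mod_cast h))

end QBinom

section Grassmannian

variable (K : Type*) {V : Type*} [Field K] [AddCommGroup V] [Module K V]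

theorem span_range_subtype_comp_eq {U : Submodule K V} [FiniteDimensional K U] {t : ℕ}
    {w : Fin t → U} (hw : LinearIndependent K w) (hU : finrank K U = t) :
    Submodule.span K (Set.range (U.subtype ∘ w)) = U := by
  rw [Set.range_comp, Submodule.span_image, hw.span_eq_top_of_card_eq_finrank' (by simp [hU]),
    Submodule.map_subtype_top]

def linearIndependentSpanEquiv (U : Submodule K V) [FiniteDimensional K U] {t : ℕ}
    (hU : finrank K U = t) :
    {v : {v : Fin t → V // LinearIndependent K v} // Submodule.span K (Set.range v.1) = U} ≃
      {w : Fin t → U // LinearIndependent K w} where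
  toFun v := ⟨fun i => ⟨v.1.1 i, v.2.le (Submodule.subset_span ⟨i, rfl⟩)⟩,
    .of_comp U.subtype v.1.2⟩
  invFun w := ⟨⟨U.subtype ∘ w.1, w.2.map' U.subtype U.ker_subtype⟩,
    span_range_subtype_comp_eq K w.2 hU⟩
  left_inv _ := rfl
  right_inv _ := rfl

variable [Fintype K] [Finite V]

theorem card_submodule_finrank_eq (t : ℕ) :
    Nat.card {U : Submodule K V // finrank K U = t} = qBinom (Fintype.card K) (finrank K V) t := by
  rcases lt_or_ge (finrank K V) t with ht | ht
  · rw [qBinom_eq_zero_of_lt ht, Nat.card_eq_zero]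
    exact .inl ⟨fun U => (Submodule.finrank_le U.1).not_gt (by rw [U.2]; exact ht)⟩
  have : Fintype {U : Submodule K V // finrank K U = t} := Fintype.ofFinite _
  set q := Fintype.card K
  have hq : 2 ≤ q := Fintype.one_lt_card
  let span (v : {v : Fin t → V // LinearIndependent K v}) :
      {U : Submodule K V // finrank K U = t} :=
    ⟨Submodule.span K (Set.range v.1), by rw [finrank_span_eq_card v.2, Fintype.card_fin]⟩
  have hfiber (U : {U : Submodule K V // finrank K U = t}) :
      Nat.card {v // span v = U} = ∏ i : Fin t, (q ^ t - q ^ (i : ℕ)) := by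
    rw [Nat.card_congr ((Equiv.subtypeEquivRight fun v => Subtype.ext_iff).trans
      (linearIndependentSpanEquiv K U.1 U.2)), card_linearIndependent U.2.ge, U.2]
  have hcount : Nat.card {v : Fin t → V // LinearIndependent K v} =
      Nat.card {U : Submodule K V // finrank K U = t} * ∏ i : Fin t, (q ^ t - q ^ (i : ℕ)) := by
    rw [← Nat.card_congr (Equiv.sigmaFiberEquiv span), Nat.card_sigma]
    simp only [hfiber, sum_const, card_univ, smul_eq_mul, Nat.card_eq_fintype_card]
  rw [card_linearIndependent ht] at hcount
  have hcount' := congrArg (Nat.cast : ℕ → ℤ) hcount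
  rw [Nat.cast_mul, cast_prod_pow_sub_pow (by omega) ht, cast_prod_pow_sub_pow (by omega) le_rfl,
    ← qBinom_mul_prod_pow_sub_pow] at hcount'
  exact_mod_cast (mul_right_cancel₀ (prod_pow_sub_pow_ne_zero hq t) hcount').symm

theorem card_submodule_le_finrank_eq (W : Submodule K V) (t : ℕ) :
    Nat.card {U : Submodule K V // U ≤ W ∧ finrank K U = t} =
      qBinom (Fintype.card K) (finrank K W) t := by
  rw [← card_submodule_finrank_eq K t,
    ← Nat.card_congr (Equiv.subtypeSubtypeEquivSubtypeInter (· ≤ W) _)]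
  exact Nat.card_congr <| .symm <| (Submodule.MapSubtype.orderIso W).toEquiv.subtypeEquiv
    fun U => by
      show _ ↔ finrank K (U.map W.subtype) = t
      rw [Submodule.finrank_map_subtype_eq]

/-- Taking dual annihilators turns the `s`-dimensional subspaces containing `W` into the
`(n - s)`-dimensional subspaces of the dual contained in `W⁰`, a space of dimension `n - dim W`. -/
theorem card_submodule_ge_finrank_eq (W : Submodule K V) {s : ℕ} (hs : s ≤ finrank K V) :
    Nat.card {U : Submodule K V // W ≤ U ∧ finrank K U = s} =
      qBinom (Fintype.card K) (finrank K V - finrank K W) (finrank K V - s) := by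
  have : Finite (Dual K V) := Module.finite_of_finite K
  rw [← Subspace.finrank_add_finrank_dualAnnihilator_eq W, Nat.add_sub_cancel_left,
    ← card_submodule_le_finrank_eq K W.dualAnnihilator]
  let annihilator := (Subspace.orderIsoFiniteDimensional (K := K) (V := V)).toEquiv.trans
    OrderDual.ofDual
  refine Nat.card_congr <| annihilator.subtypeEquiv fun U => ?_
  have hU := Subspace.finrank_add_finrank_dualAnnihilator_eq U
  have hW := Subspace.finrank_add_finrank_dualAnnihilator_eq W
  show _ ↔ U.dualAnnihilator ≤ W.dualAnnihilator ∧ finrank K U.dualAnnihilator = _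
  rw [Subspace.dualAnnihilator_le_dualAnnihilator_iff]
  exact and_congr_right' (by omega)

end Grassmannian

section RankMetric

variable {k m : ℕ}

theorem mem_matIn_iff_span_cols_le {U : Submodule F (Fin k → F)} {M : Matrix (Fin k) (Fin m) F} :
    M ∈ matIn m U ↔ Submodule.span F (Set.range M.col) ≤ U := by
  rw [Submodule.span_le, Set.range_subset_iff]
  rfl

theorem card_submodule_finrank_eq_of_mem_matIn [Fintype F] {s : ℕ} (hs : s ≤ k)
    (M : Matrix (Fin k) (Fin m) F) :
    Nat.card {U : Submodule F (Fin k → F) // finrank F U = s ∧ M ∈ matIn m U} =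
      qBinom (Fintype.card F) (k - M.rank) (k - s) := by
  have hk : finrank F (Fin k → F) = k := finrank_fin_fun F
  rw [Nat.card_congr <| Equiv.subtypeEquivRight fun U => by
      rw [and_comm, mem_matIn_iff_span_cols_le],
    card_submodule_ge_finrank_eq F _ (hs.trans_eq hk.symm), hk, M.rank_eq_finrank_span_cols]

theorem sum_filter_mem_comp_rank [Fintype F] (C : Submodule F (Matrix (Fin k) (Fin m) F))
    [DecidablePred (· ∈ C)] (f : ℕ → ℕ) :
    ∑ M ∈ univ.filter (· ∈ C), f M.rank = ∑ i ∈ range (k + 1), rankDist C i * f i := by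
  have hrank : ∀ M ∈ univ.filter (· ∈ C), M.rank ∈ range (k + 1) := fun M _ =>
    mem_range.mpr (Nat.lt_succ_of_le (by simpa using M.rank_le_card_height))
  rw [← sum_fiberwise_of_maps_to hrank]
  refine sum_congr rfl fun i _ => ?_
  rw [sum_congr rfl fun M hM => congrArg f (mem_filter.mp hM).2, sum_const, smul_eq_mul,
    filter_filter, rankDist, Nat.card_eq_fintype_card, Fintype.card_subtype]

end RankMetric

theorem stmt_5_general (F : Type) [Field F] [Fintype F] (q k m : ℕ) (hq : Fintype.card F = q)
    (C : Submodule F (Matrix (Fin k) (Fin m) F)) (s : ℕ) (hs : s ≤ k) :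
    ∑ᶠ U ∈ {U : Submodule F (Fin k → F) | Module.finrank F ↥U = s},
        Nat.card ↥(C ⊓ matIn m U) =
      ∑ i ∈ Finset.range (k + 1), rankDist C i * qBinom q (k - i) (k - s) := by
  classical
  subst hq
  have : Fintype (Submodule F (Fin k → F)) := Fintype.ofFinite _
  let S := univ.filter fun U : Submodule F (Fin k → F) => finrank F U = s
  let colspIn (U : Submodule F (Fin k → F)) (M : Matrix (Fin k) (Fin m) F) := M ∈ matIn m U
  have hS : (S : Set (Submodule F (Fin k → F))) =
      {U : Submodule F (Fin k → F) | finrank F U = s} := by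
    ext; simp [S]
  have hC (U) :
      Nat.card ↥(C ⊓ matIn m U) = #((univ.filter (· ∈ C)).bipartiteAbove colspIn U) := by
    rw [Nat.card_eq_fintype_card, Fintype.card_subtype, bipartiteAbove, filter_filter]
    simp only [Submodule.mem_inf, colspIn]
  have hU (M) : #(S.bipartiteBelow colspIn M) = qBinom (Fintype.card F) (k - M.rank) (k - s) := by
    rw [← card_submodule_finrank_eq_of_mem_matIn hs, Nat.card_eq_fintype_card,
      Fintype.card_subtype, bipartiteBelow, filter_filter]
  rw [← hS, finsum_mem_coe_finset, sum_congr rfl fun U _ => hC U,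
    sum_card_bipartiteAbove_eq_sum_card_bipartiteBelow, sum_congr rfl fun M _ => hU M]
  exact sum_filter_mem_comp_rank C fun i => qBinom (Fintype.card F) (k - i) (k - s)

/-- Double counting: the sum over all `s`-dimensional subspaces `U` of `|C ∩ Mat_U|`
equals a weighted sum of the rank distribution of `C`. -/
theorem stmt_5 (F : Type) [Field F] [Fintype F] (q k m : ℕ) (hq : Fintype.card F = q)
    (hk : 0 < k) (hm : 0 < m) (C : Submodule F (Matrix (Fin k) (Fin m) F))
    (s : ℕ) (hs : s ≤ k) :
    ∑ᶠ U ∈ {U : Submodule F (Fin k → F) | Module.finrank F ↥U = s},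
        Nat.card ↥(C ⊓ matIn m U) =
      ∑ i ∈ Finset.range (k + 1), rankDist C i * qBinom q (k - i) (k - s) :=
  stmt_5_general F q k m hq C s hs
end
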